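/- Let n ≥ 2 and let A be a symmetric real n×n matrix. Set t = tr(A) and K = (Σ_{j=1}^n A_{1j}²)^{1/2}. Then ‖A‖_F² ≥ (n/(n−1))·K² + (1/(n−1))·t² − (2/(n−1))·t·A_{11}. -/
import Mathlib


/-- Pointwise algebraic content of the refined Kato-type inequality (Remark after Lemma 3):
for a symmetric real `n × n` matrix `A` (`n ≥ 2`), with `t = tr A` and `K` the Euclidean norm
of the first row of `A`, one has
`‖A‖_F² ≥ (n/(n−1))·K² + (1/(n−1))·t² − (2/(n−1))·t·A₁₁`. -/
theorem refined_kato_inequality_pointwise (n : ℕ) (hn : 2 ≤ n)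
    (A : Matrix (Fin n) (Fin n) ℝ) (hA : A.IsSymm)
    (t : ℝ) (ht : t = A.trace)
    (K : ℝ) (hK : K = Real.sqrt (∑ j, (A ⟨0, by omega⟩ j) ^ 2)) :
    ∑ i, ∑ j, (A i j) ^ 2 ≥
      ((n : ℝ) / ((n : ℝ) - 1)) * K ^ 2 + (1 / ((n : ℝ) - 1)) * t ^ 2
        - (2 / ((n : ℝ) - 1)) * t * A ⟨0, by omega⟩ ⟨0, by omega⟩ := by
  set a0 : Fin n := ⟨0, by omega⟩ with ha0
  set R : ℝ := ∑ j, (A a0 j) ^ 2 with hR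
  set a : ℝ := A a0 a0 with ha
  have hsymm : ∀ i j, A i j = A j i := fun i j => by
    conv_lhs => rw [← hA]
    rfl
  have hK2 : K ^ 2 = R := by
    rw [hK]; exact Real.sq_sqrt (Finset.sum_nonneg fun j _ => sq_nonneg _)
  set s : Finset (Fin n) := Finset.univ.erase a0 with hs
  have hcard : (s.card : ℝ) = (n : ℝ) - 1 := by
    rw [hs, Finset.card_erase_of_mem (Finset.mem_univ _), Finset.card_univ, Fintype.card_fin]
    have : 1 ≤ n := by omega
    push_cast [Nat.cast_sub this]
    ring
  -- decompose the full sum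
  have hrow : ∀ i ∈ s, A i a0 ^ 2 + A i i ^ 2 ≤ ∑ j, (A i j) ^ 2 := by
    intro i hi
    have hi' : i ≠ a0 := Finset.ne_of_mem_erase hi
    rw [← Finset.sum_erase_add _ _ (Finset.mem_univ a0)]
    have h1 : A i i ^ 2 ≤ ∑ j ∈ Finset.univ.erase a0, (A i j) ^ 2 :=
      Finset.single_le_sum (f := fun j => A i j ^ 2) (fun j _ => sq_nonneg _)
        (Finset.mem_erase.mpr ⟨hi', Finset.mem_univ _⟩)
    linarith
  have hsplit : ∑ i, ∑ j, (A i j) ^ 2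
      = (∑ i ∈ s, ∑ j, (A i j) ^ 2) + R := by
    rw [hR, hs, Finset.sum_erase_add _ _ (Finset.mem_univ a0)]
  have hcol : ∑ i ∈ s, A i a0 ^ 2 = R - a ^ 2 := by
    have : ∑ i ∈ s, A i a0 ^ 2 = ∑ i ∈ s, (A a0 i) ^ 2 := by
      refine Finset.sum_congr rfl fun i _ => by rw [hsymm]
    rw [this, hR, ha, hs]
    have h2 := Finset.sum_erase_add Finset.univ (fun j => (A a0 j) ^ 2) (Finset.mem_univ a0)
    linarith
  have hdiag : ∑ i ∈ s, A i i = t - a := by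
    rw [ht, ha, hs, Matrix.trace]
    have := Finset.sum_erase_add Finset.univ (fun i => A i i) (Finset.mem_univ a0)
    simp only [Matrix.diag] at *
    linarith
  set D : ℝ := ∑ i ∈ s, A i i ^ 2 with hD
  have hCS : (t - a) ^ 2 ≤ ((n : ℝ) - 1) * D := by
    rw [← hdiag, ← hcard, hD]
    exact_mod_cast sq_sum_le_card_mul_sum_sq (s := s) (f := fun i => A i i)
  have hS : R + (R - a ^ 2) + D ≤ ∑ i, ∑ j, (A i j) ^ 2 := by
    rw [hsplit, ← hcol, hD]
    have h := Finset.sum_le_sum hrow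
    rw [Finset.sum_add_distrib] at h
    linarith
  have hRa : a ^ 2 ≤ R := by
    rw [hR, ha]
    exact Finset.single_le_sum (fun j _ => sq_nonneg (A a0 j)) (Finset.mem_univ a0)
  have hm : (1 : ℝ) ≤ (n : ℝ) - 1 := by
    have : (2 : ℝ) ≤ (n : ℝ) := by exact_mod_cast hn
    linarith
  have hm0 : (0 : ℝ) < (n : ℝ) - 1 := by linarith
  rw [ge_iff_le, show ((n : ℝ) / ((n : ℝ) - 1)) * K ^ 2 + (1 / ((n : ℝ) - 1)) * t ^ 2
        - (2 / ((n : ℝ) - 1)) * t * A a0 a0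
      = ((n : ℝ) * K ^ 2 + t ^ 2 - 2 * t * a) / ((n : ℝ) - 1) by rw [← ha]; field_simp,
    div_le_iff₀ hm0]
  rw [hK2]
  nlinarith [mul_le_mul_of_nonneg_right hS hm0.le,
    mul_nonneg (by linarith : (0:ℝ) ≤ (n:ℝ) - 2) (by linarith : (0:ℝ) ≤ R - a ^ 2)]
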